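/- arXiv:2506.20087 — 3 statements merged into one kernel-verified Lean document; each statement's English description precedes it below -/
import Mathlib

section
/- The Herschel graph is not hamiltonian. -/
/-!
The Herschel graph is bipartite, so every closed walk in it has even length. A hamiltonian
cycle is a closed walk through its 11 vertices of length 11, which is odd.
-/

/-- The Herschel graph: the bipartite planar graph on 11 vertices and 18 edges,
the smallest non-hamiltonian polyhedral graph, with parts of sizes 5 and 6. -/
def herschelGraph : SimpleGraph (Fin 11) :=
  SimpleGraph.fromRel (fun i j =>
    (i, j) ∈ ([(0, 2), (0, 3), (0, 4), (1, 2), (1, 3), (1, 5), (2, 6), (2, 7), (3, 8), (3, 9),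
      (4, 6), (4, 8), (5, 7), (5, 9), (6, 10), (7, 10), (8, 10), (9, 10)] :
        List (Fin 11 × Fin 11)))

theorem SimpleGraph.Walk.not_isHamiltonianCycle_of_colorable_two {α : Type*} [Fintype α]
    [DecidableEq α] {G : SimpleGraph α} (hG : G.Colorable 2) (hodd : Odd (Fintype.card α))
    {a : α} (p : G.Walk a a) : ¬ p.IsHamiltonianCycle := fun hp => by
  have heven : Even p.length := SimpleGraph.two_colorable_iff_forall_loop_even.mp hG a p
  rw [hp.length_eq] at heven
  exact Nat.not_even_iff_odd.mpr hodd heven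

def herschelGraph.bicoloring : herschelGraph.Coloring Bool :=
  SimpleGraph.Coloring.mk (fun v => decide (v ∈ ({2, 3, 4, 5, 10} : Finset (Fin 11)))) <| by
    intro u v huv
    rw [herschelGraph, SimpleGraph.fromRel_adj] at huv
    revert u v
    decide

/-- The Herschel graph is not hamiltonian. -/
theorem herschel_not_hamiltonian :
    ¬ ∃ (a : Fin 11) (p : herschelGraph.Walk a a), p.IsHamiltonianCycle := by
  rintro ⟨a, p, hp⟩
  exact p.not_isHamiltonianCycle_of_colorable_two herschelGraph.bicoloring.colorable
    (by decide) hp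
end

section
/- Let G be a graph containing two vertices w1, w2 such that G - {w1, w2} is a cycle C, and suppose either every vertex of C is adjacent to both w1 and w2, or C has even length 2t with vertices v1, ..., v_{2t} in cyclic order such that the odd-indexed vertices are adjacent to w1 and the even-indexed vertices are adjacent to w2. Then G is hamiltonian. -/
open SimpleGraph Walk

/-- Build a walk along consecutive values of `f`. -/
def buildWalk {V : Type*} (G : SimpleGraph V) (f : ℕ → V) :
    ∀ k : ℕ, (∀ i < k, G.Adj (f i) (f (i+1))) → G.Walk (f 0) (f k)
  | 0, _ => Walk.nil
  | k+1, h => (buildWalk G f k (fun i hi => h i (Nat.lt_succ_of_lt hi))).concat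
      (h k (Nat.lt_succ_self k))

lemma buildWalk_support {V : Type*} (G : SimpleGraph V) (f : ℕ → V) (k : ℕ)
    (h : ∀ i < k, G.Adj (f i) (f (i+1))) :
    (buildWalk G f k h).support = (List.range (k+1)).map f := by
  induction k with
  | zero => simp [buildWalk, List.range_succ]
  | succ k ih =>
    rw [List.range_succ]
    simp [buildWalk, support_concat, ih]

lemma buildWalk_edges {V : Type*} (G : SimpleGraph V) (f : ℕ → V) (k : ℕ)
    (h : ∀ i < k, G.Adj (f i) (f (i+1))) :
    (buildWalk G f k h).edges = (List.range k).map (fun i => s(f i, f (i+1))) := by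
  induction k with
  | zero => simp [buildWalk]
  | succ k ih =>
    rw [List.range_succ]
    simp [buildWalk, edges_concat, ih]

/-- If `f` lists all vertices cyclically with consecutive adjacency, injectively and
surjectively, then the graph is hamiltonian. -/
lemma ham_of_cyclic {V : Type*} [Fintype V] [DecidableEq V] {G : SimpleGraph V} (n : ℕ)
    (hn : 2 ≤ n) (f : ℕ → V)
    (hadj : ∀ i < n, G.Adj (f i) (f (i+1)))
    (hlast : G.Adj (f n) (f 0))
    (hinj : ∀ i ≤ n, ∀ j ≤ n, f i = f j → i = j)
    (hsurj : ∀ v, ∃ i ≤ n, f i = v) :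
    ∃ (a : V) (p : G.Walk a a), p.IsHamiltonianCycle := by
  have hnodup : ((List.range (n+1)).map f).Nodup := by
    rw [List.nodup_map_iff_inj_on List.nodup_range]
    intro i hi j hj hij
    exact hinj i (by simpa using Nat.lt_succ_iff.mp (List.mem_range.mp hi))
      j (by simpa using Nat.lt_succ_iff.mp (List.mem_range.mp hj)) hij
  set q := buildWalk G f n hadj with hq
  have hqsupp : q.support = (List.range (n+1)).map f := buildWalk_support G f n hadj
  have hqpath : q.IsPath := by
    rw [Walk.isPath_def, hqsupp]; exact hnodup
  have hedge : s(f n, f 0) ∉ q.edges := by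
    rw [buildWalk_edges]
    intro hmem
    obtain ⟨i, hi, heq⟩ := List.mem_map.mp hmem
    rw [List.mem_range] at hi
    rw [Sym2.eq_iff] at heq
    rcases heq with ⟨h1, h2⟩ | ⟨h1, h2⟩
    · have := hinj i (le_of_lt hi) n le_rfl h1; omega
    · have := hinj i (le_of_lt hi) 0 (by omega) h1
      have := hinj (i+1) (by omega) n le_rfl h2
      omega
  set p := Walk.cons hlast q with hp
  refine ⟨f n, p, ?_⟩
  rw [SimpleGraph.Walk.isHamiltonianCycle_iff_isCycle_and_support_count_tail_eq_one]
  constructor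
  · exact (Walk.cons_isCycle_iff q hlast).mpr ⟨hqpath, hedge⟩
  · intro a
    have : p.support.tail = (List.range (n+1)).map f := by
      rw [hp, Walk.support_cons, List.tail_cons, hqsupp]
    rw [this]
    refine List.count_eq_one_of_mem hnodup ?_
    obtain ⟨i, hi, hfi⟩ := hsurj a
    exact List.mem_map.mpr ⟨i, List.mem_range.mpr (by omega), hfi⟩

/-- If `G - {w₁, w₂}` is a cycle `C` and either every vertex of `C` is adjacent
to both `w₁` and `w₂`, or `C` has even length with vertices alternately adjacent to `w₁`
and `w₂`, then `G` is hamiltonian. -/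
theorem two_vertices_plus_cycle_hamiltonian {V : Type*} [Fintype V] [DecidableEq V]
    (G : SimpleGraph V) (w₁ w₂ : V) (hw : w₁ ≠ w₂)
    (m : ℕ) (hm : 3 ≤ m)
    (e : SimpleGraph.cycleGraph m ≃g G.induce (({w₁, w₂} : Set V)ᶜ))
    (h : (∀ x : (({w₁, w₂} : Set V)ᶜ : Set V), G.Adj w₁ ↑x ∧ G.Adj w₂ ↑x) ∨
      (Even m ∧ ∀ i : Fin m,
        (Even (i : ℕ) → G.Adj w₁ ↑(e i)) ∧ (¬ Even (i : ℕ) → G.Adj w₂ ↑(e i)))) :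
    ∃ (a : V) (p : G.Walk a a), p.IsHamiltonianCycle := by
  have hmlt : ∀ j, j % m < m := fun j => Nat.mod_lt _ (by omega)
  set E : ℕ → V := fun j => ((e ⟨j % m, hmlt j⟩ : _) : V) with hE
  have hEadj : ∀ j, j + 1 < m → G.Adj (E j) (E (j+1)) := by
    intro j hj
    have hc : (cycleGraph m).Adj ⟨j % m, hmlt j⟩ ⟨(j+1) % m, hmlt (j+1)⟩ := by
      rw [SimpleGraph.cycleGraph_adj']
      right
      simp only [Fin.sub_def]
      rw [Nat.mod_eq_of_lt hj, Nat.mod_eq_of_lt (show j < m by omega)]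
      have h1 : m - j + (j + 1) = m + 1 := by omega
      rw [h1, Nat.add_mod_left, Nat.mod_eq_of_lt (by omega)]
    have := e.map_adj_iff.mpr hc
    simpa [SimpleGraph.comap_adj] using this
  have hne1 : ∀ j, ¬ (w₁ = E j) := by
    intro j hj
    have := (e ⟨j % m, hmlt j⟩).property
    simp [hE] at hj
    rw [← hj] at this
    simp at this
  have hne2 : ∀ j, ¬ (w₂ = E j) := by
    intro j hj
    have := (e ⟨j % m, hmlt j⟩).property
    simp [hE] at hj
    rw [← hj] at this
    simp at this
  have hEinj : ∀ i < m, ∀ j < m, E i = E j → i = j := by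
    intro i hi j hj hij
    have h1 : e ⟨i % m, hmlt i⟩ = e ⟨j % m, hmlt j⟩ := Subtype.coe_injective hij
    have h2 := e.toEquiv.injective h1
    have := Fin.mk.injEq (i % m) (hmlt i) (j % m) (hmlt j) ▸ h2
    rw [Nat.mod_eq_of_lt hi, Nat.mod_eq_of_lt hj] at this
    simpa using this
  have hEcoe : ∀ (k : Fin m), E k.val = ↑(e k) := by
    intro k
    have hfin : (⟨k.val % m, hmlt k.val⟩ : Fin m) = k := by
      ext; simp [Nat.mod_eq_of_lt k.isLt]
    simp [hE, hfin]
  rcases h with h1 | ⟨heven, h2⟩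
  · -- Case 1: all vertices of C adjacent to both w₁, w₂
    have hW1 : ∀ j, G.Adj w₁ (E j) := fun j => (h1 (e ⟨j % m, hmlt j⟩)).1
    have hW2 : ∀ j, G.Adj w₂ (E j) := fun j => (h1 (e ⟨j % m, hmlt j⟩)).2
    set f : ℕ → V := fun i => if i = 0 then w₁ else if i = m then w₂
      else if i = m+1 then E (m-1) else E (i-1) with hf
    have hf0 : f 0 = w₁ := by simp [hf]
    have hfm : f m = w₂ := by
      simp only [hf]; rw [if_neg (by omega)]; simp
    have hfm1 : f (m+1) = E (m-1) := by
      simp only [hf]; rw [if_neg (by omega), if_neg (by omega)]; simp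
    have hfi : ∀ i, 1 ≤ i → i ≤ m-1 → f i = E (i-1) := by
      intro i hi1 hi2
      simp only [hf]; rw [if_neg (by omega), if_neg (by omega), if_neg (by omega)]
    refine ham_of_cyclic (m+1) (by omega) f ?_ ?_ ?_ ?_
    · intro i hi
      by_cases hi0 : i = 0
      · subst hi0
        rw [hf0, hfi 1 le_rfl (by omega)]
        exact hW1 0
      · by_cases him : i = m
        · rw [him, hfm, hfm1]
          exact hW2 (m-1)
        · by_cases him1 : i = m-1
          · rw [him1, hfi (m-1) (by omega) le_rfl, show m-1+1 = m by omega, hfm]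
            exact (hW2 (m-1-1)).symm
          · rw [hfi i (by omega) (by omega), hfi (i+1) (by omega) (by omega),
              Nat.add_sub_cancel]
            have h' := hEadj (i-1) (by omega)
            rwa [show i-1+1 = i by omega] at h'
    · rw [hfm1, hf0]
      exact (hW1 (m-1)).symm
    · intro i hi j hj hij
      simp only [hf] at hij
      split_ifs at hij <;>
        first
          | omega
          | exact absurd hij hw
          | exact absurd hij.symm hw
          | exact absurd hij (hne1 _)
          | exact absurd hij.symm (hne1 _)
          | exact absurd hij (hne2 _)
          | exact absurd hij.symm (hne2 _)
          | (have := hEinj _ (by omega) _ (by omega) hij; omega)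
    · intro v
      by_cases hv : v ∈ ({w₁, w₂} : Set V)ᶜ
      · obtain ⟨k, hk⟩ := e.toEquiv.surjective ⟨v, hv⟩
        have hkv : E k.val = v := by rw [hEcoe k, show e k = ⟨v, hv⟩ from hk]
        by_cases hk1 : k.val = m - 1
        · exact ⟨m+1, by omega, by rw [hfm1, ← hk1, hkv]⟩
        · have hklt := k.isLt
          refine ⟨k.val + 1, by omega, ?_⟩
          rw [hfi (k.val+1) (by omega) (by omega), Nat.add_sub_cancel, hkv]
      · simp only [Set.mem_compl_iff, Set.mem_insert_iff, Set.mem_singleton_iff,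
          not_not] at hv
        rcases hv with rfl | rfl
        · exact ⟨0, by omega, hf0⟩
        · exact ⟨m, by omega, hfm⟩
  · -- Case 2: even cycle, alternating adjacency
    obtain ⟨t, ht⟩ := heven
    have hm4 : 4 ≤ m := by omega
    have hW1 : ∀ j < m, Even j → G.Adj w₁ (E j) := by
      intro j hj hev
      have := (h2 ⟨j, hj⟩).1 (by simpa using hev)
      rwa [← hEcoe ⟨j, hj⟩] at this
    have hW2 : ∀ j < m, ¬ Even j → G.Adj w₂ (E j) := by
      intro j hj hev
      have := (h2 ⟨j, hj⟩).2 (by simpa using hev)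
      rwa [← hEcoe ⟨j, hj⟩] at this
    have hodd1 : ¬ Even (m-1) := by rintro ⟨r, hr⟩; omega
    have hodd3 : ¬ Even (m-3) := by rintro ⟨r, hr⟩; omega
    have heven2 : Even (m-2) := ⟨t-1, by omega⟩
    set f : ℕ → V := fun i => if i = 0 then w₁ else if i = m-1 then w₂
      else if i = m then E (m-1) else if i = m+1 then E (m-2) else E (i-1) with hf
    have hf0 : f 0 = w₁ := by simp [hf]
    have hfw2 : f (m-1) = w₂ := by
      simp only [hf]; rw [if_neg (by omega)]; simp
    have hfm : f m = E (m-1) := by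
      simp only [hf]; rw [if_neg (by omega), if_neg (by omega)]; simp
    have hfm1 : f (m+1) = E (m-2) := by
      simp only [hf]
      rw [if_neg (by omega), if_neg (by omega), if_neg (by omega)]; simp
    have hfi : ∀ i, 1 ≤ i → i ≤ m-2 → f i = E (i-1) := by
      intro i hi1 hi2
      simp only [hf]
      rw [if_neg (by omega), if_neg (by omega), if_neg (by omega), if_neg (by omega)]
    refine ham_of_cyclic (m+1) (by omega) f ?_ ?_ ?_ ?_
    · intro i hi
      by_cases hi0 : i = 0
      · subst hi0
        rw [hf0, hfi 1 le_rfl (by omega)]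
        exact hW1 0 (by omega) Even.zero
      · by_cases him1 : i = m-1
        · rw [him1, hfw2, show m-1+1 = m by omega, hfm]
          exact hW2 (m-1) (by omega) hodd1
        · by_cases him : i = m
          · rw [him, hfm, hfm1]
            have h' := hEadj (m-2) (by omega)
            rw [show m-2+1 = m-1 by omega] at h'
            exact h'.symm
          · by_cases him2 : i = m-2
            · rw [him2, hfi (m-2) (by omega) le_rfl, show m-2+1 = m-1 by omega, hfw2,
                show m-2-1 = m-3 by omega]
              exact (hW2 (m-3) (by omega) hodd3).symm
            · rw [hfi i (by omega) (by omega), hfi (i+1) (by omega) (by omega),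
                Nat.add_sub_cancel]
              have h' := hEadj (i-1) (by omega)
              rwa [show i-1+1 = i by omega] at h'
    · rw [hfm1, hf0]
      exact (hW1 (m-2) (by omega) heven2).symm
    · intro i hi j hj hij
      simp only [hf] at hij
      split_ifs at hij <;>
        first
          | omega
          | exact absurd hij hw
          | exact absurd hij.symm hw
          | exact absurd hij (hne1 _)
          | exact absurd hij.symm (hne1 _)
          | exact absurd hij (hne2 _)
          | exact absurd hij.symm (hne2 _)
          | (have := hEinj _ (by omega) _ (by omega) hij; omega)
    · intro v
      by_cases hv : v ∈ ({w₁, w₂} : Set V)ᶜ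
      · obtain ⟨k, hk⟩ := e.toEquiv.surjective ⟨v, hv⟩
        have hkv : E k.val = v := by rw [hEcoe k, show e k = ⟨v, hv⟩ from hk]
        by_cases hk1 : k.val = m - 1
        · exact ⟨m, by omega, by rw [hfm, ← hk1, hkv]⟩
        · by_cases hk2 : k.val = m - 2
          · exact ⟨m+1, by omega, by rw [hfm1, ← hk2, hkv]⟩
          · have hklt := k.isLt
            refine ⟨k.val + 1, by omega, ?_⟩
            rw [hfi (k.val+1) (by omega) (by omega), Nat.add_sub_cancel, hkv]
      · simp only [Set.mem_compl_iff, Set.mem_insert_iff, Set.mem_singleton_iff,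
          not_not] at hv
        rcases hv with rfl | rfl
        · exact ⟨0, by omega, hf0⟩
        · exact ⟨m-1, by omega, hfw2⟩
end

section
/- K_{2,3} is the unique (up to isomorphism) minor-minimal 2-connected non-hamiltonian graph: K_{2,3} is 2-connected and non-hamiltonian, and every 2-connected non-hamiltonian graph contains K_{2,3} as a minor. -/
/-- A graph on more than `k` vertices is `k`-connected if removing fewer than `k`
vertices never disconnects it. -/
def KConnected {V : Type*} [Fintype V] (k : ℕ) (G : SimpleGraph V) : Prop :=
  k < Fintype.card V ∧ ∀ S : Finset V, S.card < k → (G.induce ((↑S : Set V)ᶜ)).Connected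

/-- `H` is a minor of `G`: the vertices of `G` can be partially assigned to pairwise disjoint
connected branch sets, one for each vertex of `H`, such that every edge of `H` is witnessed
by an edge of `G` between the corresponding branch sets. -/
def IsMinor {W V : Type*} (H : SimpleGraph W) (G : SimpleGraph V) : Prop :=
  ∃ f : V → Option W,
    (∀ w : W, ∃ v : V, f v = some w) ∧
    (∀ w : W, (G.induce {v | f v = some w}).Connected) ∧
    (∀ w₁ w₂ : W, H.Adj w₁ w₂ →
      ∃ v₁ v₂ : V, f v₁ = some w₁ ∧ f v₂ = some w₂ ∧ G.Adj v₁ v₂)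

section Aux
set_option linter.unnecessarySeqFocus false
open SimpleGraph

variable {V : Type*} {G : SimpleGraph V}

def liftWalk {S : Set V} :
    ∀ {u v : V} (hu : u ∈ S) (hv : v ∈ S) (w : G.Walk u v),
      (∀ x ∈ w.support, x ∈ S) → (G.induce S).Walk ⟨u, hu⟩ ⟨v, hv⟩
  | _, _, _, _, Walk.nil, _ => Walk.nil
  | _, _, hu, hv, Walk.cons h p, hs =>
      Walk.cons (by exact h)
        (liftWalk (hs _ (by simp)) hv p (fun x hx => hs x (by simp [hx])))

lemma aux_induce_connected {S : Set V} (hne : S.Nonempty)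
    (h : ∀ u ∈ S, ∀ v ∈ S, ∃ w : G.Walk u v, ∀ x ∈ w.support, x ∈ S) :
    (G.induce S).Connected := by
  have : Nonempty ↑S := ⟨⟨hne.choose, hne.choose_spec⟩⟩
  refine Connected.mk fun u v => ?_
  obtain ⟨w, hw⟩ := h u u.2 v v.2
  exact ⟨by simpa using liftWalk u.2 v.2 w hw⟩

lemma aux_singleton_connected (x : V) : (G.induce {x}).Connected :=
  aux_induce_connected ⟨x, rfl⟩ (by
    rintro u rfl v rfl
    exact ⟨Walk.nil, by simp⟩)

lemma aux_hit {S : Set V} {xf t : V} (ht : t ∈ S) :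
    ∀ {u : V} (w : G.Walk u t) (hu : u ∉ S), (∀ z ∈ w.support, z ≠ xf) →
      ∃ (k y : V) (hk : k ∉ S), y ∈ S ∧ y ≠ xf ∧ G.Adj k y ∧
        (G.induce Sᶜ).Reachable ⟨u, hu⟩ ⟨k, hk⟩ := by
  intro u w
  induction w with
  | nil => intro hu _; exact absurd ht hu
  | @cons u b t h p ih =>
    intro hu havoid
    by_cases hb : b ∈ S
    · exact ⟨u, b, hu, hb, havoid b (by simp), h, Reachable.refl _⟩
    · obtain ⟨k, y, hk, hy, hyxf, hadj, hreach⟩ :=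
        ih ht hb (fun z hz => havoid z (by simp [hz]))
      refine ⟨k, y, hk, hy, hyxf, hadj, Reachable.trans ?_ hreach⟩
      exact Adj.reachable (by exact h)

lemma aux_interior [DecidableEq V] {x y : V} (P : G.Walk x y) (hP : P.IsPath)
    (hlen : 2 ≤ P.length) :
    ∃ (A : Set V) (a b : V), (G.induce A).Connected ∧ a ∈ A ∧ b ∈ A ∧
      G.Adj x a ∧ G.Adj y b ∧ ∀ z, z ∈ A ↔ (z ∈ P.support ∧ z ≠ x ∧ z ≠ y) := by
  cases P with
  | nil => simp at hlen
  | @cons _ a₁ _ h Q =>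
    have hQpath : Q.IsPath := hP.of_cons
    have hQlen : 1 ≤ Q.length := by simpa using hlen
    have hay : y ≠ a₁ := by
      rintro rfl
      rw [Walk.isPath_iff_eq_nil] at hQpath
      simp [hQpath] at hQlen
    obtain ⟨b, h', R, hQR⟩ := Q.reverse.exists_eq_cons_of_ne hay
    have hQsupp : Q.support = R.support.reverse ++ [y] := by
      have : Q.reverse.support = y :: R.support := by rw [hQR]; simp
      have h2 := congrArg List.reverse this
      simpa using h2
    have hxQ : x ∉ Q.support := by
      have := hP.support_nodup
      simp at this; exact this.1
    have hyR : y ∉ R.support := by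
      have : Q.reverse.support.Nodup := by simpa using hQpath.support_nodup
      rw [hQR] at this; simp at this; exact this.1
    refine ⟨{z | z ∈ R.support}, a₁, b, ?_, ?_, ?_, h, h', ?_⟩
    · refine aux_induce_connected ⟨b, by simp⟩ ?_
      intro u hu v hv
      refine ⟨(R.dropUntil u hu).append (R.dropUntil v hv).reverse, ?_⟩
      intro z hz
      rw [Walk.mem_support_append_iff] at hz
      rcases hz with hz | hz
      · exact R.support_dropUntil_subset hu hz
      · exact R.support_dropUntil_subset hv (by simpa using hz)
    · simp [Walk.end_mem_support]
    · simp
    · intro z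
      constructor
      · intro hz
        have hzQ : z ∈ Q.support := by
          rw [hQsupp]; simp; exact Or.inl hz
        exact ⟨by simp [Walk.support_cons, hzQ], fun h => hxQ (h ▸ hzQ),
          fun h => hyR (h ▸ hz)⟩
      · rintro ⟨hz, hzx, hzy⟩
        rw [Walk.support_cons] at hz
        simp [hQsupp] at hz
        rcases hz with rfl | hz | rfl
        · exact absurd rfl hzx
        · exact hz
        · exact absurd rfl hzy

lemma aux_repl {S : Set V} {x y k₁ k₂ : V} (hxy : x ≠ y) (hx : x ∈ S)
    (P : G.Walk y x) (hP : P.IsPath) (hPS : ∀ z ∈ P.support, z ∈ S)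
    (KW : G.Walk k₁ k₂) (hKW : KW.IsPath) (hKS : ∀ z ∈ KW.support, z ∉ S)
    (hxk : G.Adj x k₁) (hky : G.Adj k₂ y) :
    ∃ Q : G.Walk x x, Q.IsCycle ∧ 2 + P.length ≤ Q.length := by
  have hk₁ : k₁ ∉ S := hKS _ KW.start_mem_support
  have hk₂ : k₂ ∉ S := hKS _ KW.end_mem_support
  set rest : G.Walk k₁ x := KW.append (Walk.cons hky P) with hrest
  have hsupp : rest.support = KW.support ++ P.support := by
    simp [hrest, Walk.support_append]
  have hrestPath : rest.IsPath := by
    refine Walk.IsPath.mk' ?_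
    rw [hsupp]
    refine List.Nodup.append hKW.support_nodup hP.support_nodup ?_
    intro z hz hz'
    exact hKS z hz (hPS z hz')
  have hedge : s(x, k₁) ∉ rest.edges := by
    rw [hrest, Walk.edges_append, Walk.edges_cons]
    intro hmem
    rcases List.mem_append.mp hmem with hmem | hmem
    · exact hKS x (Walk.fst_mem_support_of_mem_edges KW hmem) hx
    · rcases List.mem_cons.mp hmem with hmem | hmem
      · rw [Sym2.eq_iff] at hmem
        rcases hmem with ⟨h1, _⟩ | ⟨h1, _⟩
        · exact hk₂ (h1 ▸ hx)
        · exact hxy h1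
      · exact hk₁ (hPS _ (Walk.snd_mem_support_of_mem_edges P hmem))
  refine ⟨Walk.cons hxk rest, (Walk.cons_isCycle_iff rest hxk).mpr ⟨hrestPath, hedge⟩, ?_⟩
  simp [hrest, Walk.length_cons, Walk.length_append]
  omega

lemma K23_adj (i : Fin 2) (j : Fin 3) :
    (completeBipartiteGraph (Fin 2) (Fin 3)).Adj (Sum.inl i) (Sum.inr j) := by
  simp [completeBipartiteGraph]

lemma K23_parity {u v : Fin 2 ⊕ Fin 3}
    (p : (completeBipartiteGraph (Fin 2) (Fin 3)).Walk u v) :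
    (p.length : ZMod 2) = Sum.elim (fun _ => (0 : ZMod 2)) (fun _ => 1) u
      - Sum.elim (fun _ => (0 : ZMod 2)) (fun _ => 1) v := by
  induction p with
  | nil => simp
  | @cons a b c h p ih =>
    have hab : Sum.elim (fun _ => (0 : ZMod 2)) (fun _ => 1) a
        - Sum.elim (fun _ => (0 : ZMod 2)) (fun _ => 1) b = 1 := by
      rcases a with i | i <;> rcases b with j | j <;>
        simp_all [completeBipartiteGraph] <;> decide
    rw [Walk.length_cons]
    push_cast
    linear_combination ih - hab

lemma K23_not_hamiltonian :
    ¬ ∃ (a : Fin 2 ⊕ Fin 3) (p : (completeBipartiteGraph (Fin 2) (Fin 3)).Walk a a),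
      p.IsHamiltonianCycle := by
  rintro ⟨a, p, hp⟩
  have h1 := K23_parity p
  rw [hp.length_eq] at h1
  simp at h1
  exact absurd h1 (by decide)

lemma K23_two_connected : KConnected 2 (completeBipartiteGraph (Fin 2) (Fin 3)) := by
  constructor
  · simp
  · intro S hS
    have hcard : S.card ≤ 1 := by omega
    have exl : ∃ i : Fin 2, (Sum.inl i : Fin 2 ⊕ Fin 3) ∉ S := by
      by_contra h
      push_neg at h
      have : 1 < S.card := Finset.one_lt_card.mpr
        ⟨Sum.inl 0, h 0, Sum.inl 1, h 1, by simp⟩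
      omega
    have exr : ∃ j : Fin 3, (Sum.inr j : Fin 2 ⊕ Fin 3) ∉ S := by
      by_contra h
      push_neg at h
      have : 1 < S.card := Finset.one_lt_card.mpr
        ⟨Sum.inr 0, h 0, Sum.inr 1, h 1, by simp⟩
      omega
    obtain ⟨i₀, hi₀⟩ := exl
    refine aux_induce_connected ⟨Sum.inl i₀, by simpa using hi₀⟩ ?_
    rintro u hu v hv
    rcases u with i | j <;> rcases v with i' | j'
    · obtain ⟨j, hj⟩ := exr
      refine ⟨Walk.cons (K23_adj i j) (Walk.cons (K23_adj i' j).symm Walk.nil), ?_⟩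
      intro z hz
      simp at hz
      rcases hz with rfl | rfl | rfl
      · exact hu
      · simpa using hj
      · exact hv
    · exact ⟨Walk.cons (K23_adj i j') Walk.nil, by
        intro z hz; simp at hz; rcases hz with rfl | rfl
        · exact hu
        · exact hv⟩
    · exact ⟨Walk.cons ((K23_adj i' j).symm) Walk.nil, by
        intro z hz; simp at hz; rcases hz with rfl | rfl
        · exact hu
        · exact hv⟩
    · refine ⟨Walk.cons (K23_adj i₀ j).symm (Walk.cons (K23_adj i₀ j') Walk.nil), ?_⟩
      intro z hz
      simp at hz
      rcases hz with rfl | rfl | rfl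
      · exact hu
      · simpa using hi₀
      · exact hv

lemma aux_down {V : Type*} {G : SimpleGraph V} {T : Set V} {u v : V} (hu : u ∈ T) (hv : v ∈ T)
    (h : (G.induce T).Reachable ⟨u, hu⟩ ⟨v, hv⟩) :
    ∃ w : G.Walk u v, ∀ z ∈ w.support, z ∈ T := by
  obtain ⟨p⟩ := h
  refine ⟨(p.map (SimpleGraph.Embedding.induce T).toHom : G.Walk u v), ?_⟩
  intro z hz
  replace hz : z ∈ (p.map (SimpleGraph.Embedding.induce T).toHom).support := hz
  rw [Walk.support_map] at hz
  obtain ⟨zs, _, rfl⟩ := List.mem_map.mp hz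
  exact zs.2

lemma aux_mem_tail {V : Type*} {G : SimpleGraph V} {v : V} {c : G.Walk v v} (hnil : c ≠ Walk.nil) :
    ∀ z, z ∈ c.support ↔ z ∈ c.support.tail := by
  cases c with
  | nil => exact absurd rfl hnil
  | cons h p =>
    intro z
    rw [Walk.support_cons]
    simp only [List.tail_cons, List.mem_cons]
    constructor
    · rintro (rfl | hz)
      · exact p.end_mem_support
      · exact hz
    · exact Or.inr

lemma main3 (V : Type) [Fintype V] [DecidableEq V] (G : SimpleGraph V)
    (hconn : KConnected 2 G) (hham : ¬ ∃ (a : V) (p : G.Walk a a), p.IsHamiltonianCycle) :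
    IsMinor (completeBipartiteGraph (Fin 2) (Fin 3)) G := by
  classical
  obtain ⟨hcard, hcut⟩ := hconn
  -- reachability in G minus one vertex
  have hcut1 : ∀ (xf u v : V), u ≠ xf → v ≠ xf →
      ∃ w : G.Walk u v, ∀ z ∈ w.support, z ≠ xf := by
    intro xf u v hu hv
    have hc := hcut {xf} (by simp)
    rw [Finset.coe_singleton] at hc
    have hu' : u ∈ ({xf} : Set V)ᶜ := by simpa using hu
    have hv' : v ∈ ({xf} : Set V)ᶜ := by simpa using hv
    obtain ⟨w, hw⟩ := aux_down hu' hv' (hc.preconnected _ _)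
    exact ⟨w, fun z hz => by simpa using hw z hz⟩
  have hGreach : ∀ u v : V, G.Reachable u v := by
    intro u v
    have hc := hcut ∅ (by simp)
    have hu' : u ∈ ((↑(∅ : Finset V) : Set V))ᶜ := by simp
    have hv' : v ∈ ((↑(∅ : Finset V) : Set V))ᶜ := by simp
    obtain ⟨w, _⟩ := aux_down hu' hv' (hc.preconnected _ _)
    exact ⟨w⟩
  -- G has a cycle
  have hcyc : ∃ (a : V) (p : G.Walk a a), p.IsCycle := by
    by_contra hno
    push_neg at hno
    have hac : G.IsAcyclic := fun a p hp => hno a p hp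
    rw [isAcyclic_iff_forall_adj_isBridge] at hac
    -- G has an edge
    have hedge : ∃ u v : V, G.Adj u v := by
      obtain ⟨u, v, huv⟩ : ∃ u v : V, u ≠ v := by
        have : 1 < Fintype.card V := by omega
        exact Fintype.exists_pair_of_one_lt_card this
      obtain ⟨w⟩ := hGreach u v
      cases w with
      | nil => exact absurd rfl huv
      | cons h _ => exact ⟨_, _, h⟩
    obtain ⟨u, b, hub⟩ := hedge
    have hbr := hac hub
    rw [isBridge_iff] at hbr
    -- find third vertex
    obtain ⟨z, hzu, hzb⟩ : ∃ z : V, z ≠ u ∧ z ≠ b := by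
      by_contra h
      push_neg at h
      have : (Finset.univ : Finset V) ⊆ {u, b} := by
        intro z _
        by_cases hzu : z = u
        · simp [hzu]
        · simp [h z hzu]
      have := Finset.card_le_card this
      have h2 : ({u, b} : Finset V).card ≤ 2 := Finset.card_insert_le _ _ |>.trans (by simp)
      simp at this
      omega
    obtain ⟨w1, hw1⟩ := hcut1 b u z (G.ne_of_adj hub) hzb
    obtain ⟨w2, hw2⟩ := hcut1 u z b hzu (Ne.symm (G.ne_of_adj hub))
    have hdel : ∀ (s t : V) (w : G.Walk s t) (xf : V), (∀ z ∈ w.support, z ≠ xf) →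
        xf ∈ ({u, b} : Set V) →
        (G \ fromEdgeSet {s(u, b)}).Reachable s t := by
      intro s t w xf havoid hxf
      refine ⟨w.toDeleteEdges {s(u, b)} ?_⟩
      intro e he hmem
      simp only [Set.mem_singleton_iff] at hmem
      subst hmem
      rcases hxf with rfl | rfl
      · exact havoid _ (Walk.fst_mem_support_of_mem_edges w he) rfl
      · exact havoid _ (Walk.snd_mem_support_of_mem_edges w he) rfl
    have r1 := hdel u z w1 b hw1 (by simp)
    have r2 := hdel z b w2 u hw2 (by simp)
    exact hbr (r1.trans r2)
  -- maximal cycle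
  set L : Set ℕ := {n | ∃ (a : V) (p : G.Walk a a), p.IsCycle ∧ p.length = n} with hL
  have hLne : L.Nonempty := by
    obtain ⟨a, p, hp⟩ := hcyc
    exact ⟨p.length, a, p, hp, rfl⟩
  have hLbdd : BddAbove L := by
    refine ⟨Fintype.card V, ?_⟩
    rintro n ⟨a, p, hp, rfl⟩
    have h1 : p.support.tail.length = p.length := by
      have := p.length_support
      simp [List.length_tail, this]
    calc p.length = p.support.tail.length := h1.symm
      _ ≤ Fintype.card V := hp.support_nodup.length_le_card
  obtain ⟨a, C, hC, hClen⟩ : sSup L ∈ L := Nat.sSup_mem hLne hLbdd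
  have hmax : ∀ (b : V) (q : G.Walk b b), q.IsCycle → q.length ≤ C.length := by
    intro b q hq
    rw [hClen]
    exact le_csSup hLbdd ⟨b, q, hq, rfl⟩
  -- vertex outside C
  obtain ⟨v₀, hv₀⟩ : ∃ v₀ : V, v₀ ∉ C.support := by
    by_contra h
    push_neg at h
    refine hham ⟨a, C, ?_⟩
    rw [Walk.isHamiltonianCycle_iff_isCycle_and_support_count_tail_eq_one]
    refine ⟨hC, fun v => ?_⟩
    have hmem : v ∈ C.support.tail := (aux_mem_tail hC.ne_nil v).mp (h v)
    exact List.count_eq_one_of_mem hC.support_nodup hmem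
  set S : Set V := {z | z ∈ C.support} with hSdef
  have hv₀S : v₀ ∉ S := hv₀
  have hv₀c : v₀ ∈ Sᶜ := hv₀
  set Kset : Set V := {u | ∃ h : u ∈ Sᶜ, (G.induce Sᶜ).Reachable ⟨u, h⟩ ⟨v₀, hv₀c⟩}
    with hKdef
  have hKsub : Kset ⊆ Sᶜ := fun u hu => hu.1
  have hv₀K : v₀ ∈ Kset := ⟨hv₀c, Reachable.refl _⟩
  -- Kset induces a connected graph, with walks inside Kset
  have hKwalk : ∀ u ∈ Kset, ∀ w ∈ Kset, ∃ p : G.Walk u w, ∀ z ∈ p.support, z ∈ Kset := by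
    rintro u ⟨hu, hur⟩ w ⟨hw, hwr⟩
    obtain ⟨p⟩ := hur.trans hwr.symm
    refine ⟨(p.map (SimpleGraph.Embedding.induce Sᶜ).toHom : G.Walk u w), ?_⟩
    intro z hz
    replace hz : z ∈ (p.map (SimpleGraph.Embedding.induce Sᶜ).toHom).support := hz
    rw [Walk.support_map] at hz
    obtain ⟨zs, hzs, rfl⟩ := List.mem_map.mp hz
    refine ⟨zs.2, Reachable.trans ?_ hur⟩
    exact ⟨(p.takeUntil zs hzs).reverse⟩
  have hKconn : (G.induce Kset).Connected := aux_induce_connected ⟨v₀, hv₀K⟩ hKwalk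
  -- the cycle has at least 3 support-tail vertices
  have hlen3 : 3 ≤ C.length := hC.three_le_length
  have hTlen : C.support.tail.length = C.length := by
    have := C.length_support
    simp [List.length_tail, this]
  -- two distinct vertices of S
  obtain ⟨b₀, b₁, hb₀, hb₁, hb01⟩ : ∃ b₀ b₁ : V, b₀ ∈ S ∧ b₁ ∈ S ∧ b₀ ≠ b₁ := by
    rcases hT : C.support.tail with _ | ⟨c₀, _ | ⟨c₁, rest⟩⟩
    · rw [hT] at hTlen; simp at hTlen; omega
    · rw [hT] at hTlen; simp at hTlen; omega
    · have h₀ : c₀ ∈ C.support.tail := by rw [hT]; simp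
      have h₁ : c₁ ∈ C.support.tail := by rw [hT]; simp
      have hne : c₀ ≠ c₁ := by
        have := hC.support_nodup
        rw [hT] at this
        simp at this
        exact fun h => this.1.1 (h ▸ rfl)
      exact ⟨c₀, c₁, List.mem_of_mem_tail h₀, List.mem_of_mem_tail h₁, hne⟩
  -- attachment lemma
  have getAttach : ∀ xf : V, xf ≠ v₀ →
      ∃ k y, k ∈ Kset ∧ y ∈ S ∧ y ≠ xf ∧ G.Adj k y := by
    intro xf hxf
    obtain ⟨t, htS, htxf⟩ : ∃ t, t ∈ S ∧ t ≠ xf := by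
      by_cases h : b₀ = xf
      · exact ⟨b₁, hb₁, fun hh => hb01 (h ▸ hh ▸ rfl)⟩
      · exact ⟨b₀, hb₀, h⟩
    obtain ⟨w, hw⟩ := hcut1 xf v₀ t (Ne.symm hxf) htxf
    obtain ⟨k, y, hk, hyS, hyxf, hadj, hreach⟩ := aux_hit htS w hv₀S hw
    exact ⟨k, y, ⟨hk, hreach.symm⟩, hyS, hyxf, hadj⟩
  have haS : a ∈ S := C.start_mem_support
  obtain ⟨kx, x, hkxK, hxS, _, hkxadj⟩ := getAttach a (fun h => hv₀S (h ▸ haS))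
  obtain ⟨ky, y, hkyK, hyS, hyx, hkyadj⟩ := getAttach x (fun h => hv₀S (h ▸ hxS))
  have hxy : x ≠ y := hyx.symm
  -- rotate the cycle to start at x
  have hxC : x ∈ C.support := hxS
  set C' : G.Walk x x := C.rotate x hxC with hC'def
  have hC' : C'.IsCycle := hC.rotate hxC
  have hlenrot : C'.length = C.length := by
    have h := (C.rotate_darts x hxC).perm.length_eq
    rwa [Walk.length_darts, Walk.length_darts] at h
  have hsupC' : ∀ z, z ∈ C'.support ↔ z ∈ S := by
    intro z
    rw [aux_mem_tail hC'.ne_nil z, (C.support_rotate x hxC).mem_iff,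
      ← aux_mem_tail hC.ne_nil z]
    rfl
  have hyC' : y ∈ C'.support := (hsupC' y).mpr hyS
  set P₁ : G.Walk x y := C'.takeUntil y hyC' with hP₁def
  set P₂ : G.Walk y x := C'.dropUntil y hyC' with hP₂def
  have hspec : P₁.append P₂ = C' := C'.take_spec hyC'
  have hCsupp : C'.support = P₁.support ++ P₂.support.tail := by
    rw [← hspec, Walk.support_append]
  have hP₁cons : P₁.support = x :: P₁.support.tail := P₁.support_eq_cons
  have hP₂cons : P₂.support = y :: P₂.support.tail := P₂.support_eq_cons
  have hT'eq : C'.support.tail = P₁.support.tail ++ P₂.support.tail := by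
    have h := hCsupp
    rw [C'.support_eq_cons, hP₁cons] at h
    simpa using congrArg List.tail h
  have hnodupT' : (P₁.support.tail ++ P₂.support.tail).Nodup := by
    rw [← hT'eq]; exact hC'.support_nodup
  rw [List.nodup_append] at hnodupT'
  obtain ⟨ht₁nd, ht₂nd, hdisj⟩ := hnodupT'
  have hxP₂t : x ∈ P₂.support.tail := by
    have hx2 : x ∈ P₂.support := P₂.end_mem_support
    rw [hP₂cons] at hx2
    rcases List.mem_cons.mp hx2 with h | h
    · exact absurd h.symm hyx
    · exact h
  have hxt₁ : x ∉ P₁.support.tail := fun h => hdisj _ h _ hxP₂t rfl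
  have hP₁path : P₁.IsPath := by
    refine Walk.IsPath.mk' ?_
    rw [hP₁cons]
    exact List.nodup_cons.mpr ⟨hxt₁, ht₁nd⟩
  have hyt₁ : y ∈ P₁.support.tail := Walk.end_mem_tail_support_of_ne hxy P₁
  have hyt₂ : y ∉ P₂.support.tail := fun h => hdisj _ hyt₁ _ h rfl
  have hP₂path : P₂.IsPath := by
    refine Walk.IsPath.mk' ?_
    rw [hP₂cons]
    exact List.nodup_cons.mpr ⟨hyt₂, ht₂nd⟩
  have hsum : P₁.length + P₂.length = C.length := by
    have h := congrArg Walk.length hspec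
    rwa [Walk.length_append, hlenrot] at h
  have h1₁ : 1 ≤ P₁.length := by
    rcases Nat.eq_zero_or_pos P₁.length with h | h
    · exact absurd (Walk.eq_of_length_eq_zero h) hxy
    · exact h
  have h1₂ : 1 ≤ P₂.length := by
    rcases Nat.eq_zero_or_pos P₂.length with h | h
    · exact absurd (Walk.eq_of_length_eq_zero h) hyx
    · exact h
  have hP₁S : ∀ z ∈ P₁.support, z ∈ S :=
    fun z hz => (hsupC' z).mp (C'.support_takeUntil_subset hyC' hz)
  have hP₂S : ∀ z ∈ P₂.support, z ∈ S :=
    fun z hz => (hsupC' z).mp (C'.support_dropUntil_subset hyC' hz)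
  -- path inside Kset from kx to ky
  obtain ⟨KW0, hKW0⟩ := hKwalk kx hkxK ky hkyK
  set KW : G.Walk kx ky := KW0.bypass with hKWdef
  have hKWpath : KW.IsPath := KW0.bypass_isPath
  have hKWK : ∀ z ∈ KW.support, z ∈ Kset := fun z hz => hKW0 z (KW0.support_bypass_subset hz)
  have hKWS : ∀ z ∈ KW.support, z ∉ S := fun z hz => hKsub (hKWK z hz)
  -- both arcs have length at least 2
  have h2₁ : 2 ≤ P₁.length := by
    by_contra h
    have h1 : P₁.length = 1 := by omega
    obtain ⟨Q, hQcyc, hQlen⟩ :=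
      aux_repl hxy hxS P₂ hP₂path hP₂S KW hKWpath hKWS hkxadj.symm hkyadj
    have := hmax x Q hQcyc
    omega
  have h2₂ : 2 ≤ P₂.length := by
    by_contra h
    have h1 : P₂.length = 1 := by omega
    obtain ⟨Q, hQcyc, hQlen⟩ :=
      aux_repl hyx hyS P₁ hP₁path hP₁S KW.reverse hKWpath.reverse
        (fun z hz => hKWS z (by simpa using hz)) hkyadj.symm hkxadj
    have := hmax y Q hQcyc
    omega
  obtain ⟨A₁, a₁, b₁, hA₁conn, ha₁, hb₁, hxa₁, hyb₁, hA₁char⟩ := aux_interior P₁ hP₁path h2₁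
  obtain ⟨A₂, a₂, b₂, hA₂conn, ha₂, hb₂, hya₂, hxb₂, hA₂char⟩ := aux_interior P₂ hP₂path h2₂
  -- disjointness facts
  have hA₁S : ∀ z ∈ A₁, z ∈ S := fun z hz => hP₁S z ((hA₁char z).mp hz).1
  have hA₂S : ∀ z ∈ A₂, z ∈ S := fun z hz => hP₂S z ((hA₂char z).mp hz).1
  have hxA₁ : x ∉ A₁ := fun h => ((hA₁char x).mp h).2.1 rfl
  have hyA₁ : y ∉ A₁ := fun h => ((hA₁char y).mp h).2.2 rfl
  have hyA₂ : y ∉ A₂ := fun h => ((hA₂char y).mp h).2.1 rfl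
  have hxA₂ : x ∉ A₂ := fun h => ((hA₂char x).mp h).2.2 rfl
  have hA₁A₂ : ∀ z, z ∈ A₁ → z ∈ A₂ → False := by
    intro z hz1 hz2
    obtain ⟨hzs1, hzx, hzy⟩ := (hA₁char z).mp hz1
    obtain ⟨hzs2, hzy', hzx'⟩ := (hA₂char z).mp hz2
    rw [hP₁cons] at hzs1
    rw [hP₂cons] at hzs2
    rcases List.mem_cons.mp hzs1 with h | h1
    · exact hzx h
    rcases List.mem_cons.mp hzs2 with h | h2
    · exact hzy' h
    exact hdisj _ h1 _ h2 rfl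
  have hxK : x ∉ Kset := fun h => hKsub h hxS
  have hyK : y ∉ Kset := fun h => hKsub h hyS
  have hA₁K : ∀ z ∈ A₁, z ∉ Kset := fun z hz h => hKsub h (hA₁S z hz)
  have hA₂K : ∀ z ∈ A₂, z ∉ Kset := fun z hz h => hKsub h (hA₂S z hz)
  -- the branch map
  set f : V → Option (Fin 2 ⊕ Fin 3) := fun z =>
    if z = x then some (Sum.inl 0) else if z = y then some (Sum.inl 1) else
    if z ∈ A₁ then some (Sum.inr 0) else if z ∈ A₂ then some (Sum.inr 1) else
    if z ∈ Kset then some (Sum.inr 2) else none with hfdef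
  have hfx : f x = some (Sum.inl 0) := by simp [hfdef]
  have hfy : f y = some (Sum.inl 1) := by simp [hfdef, hyx]
  have hfA₁ : ∀ z ∈ A₁, f z = some (Sum.inr 0) := by
    intro z hz
    obtain ⟨_, hzx, hzy⟩ := (hA₁char z).mp hz
    simp [hfdef, hzx, hzy, hz]
  have hfA₂ : ∀ z ∈ A₂, f z = some (Sum.inr 1) := by
    intro z hz
    obtain ⟨_, hzy, hzx⟩ := (hA₂char z).mp hz
    have hz1 : z ∉ A₁ := fun h => hA₁A₂ z h hz
    simp [hfdef, hzx, hzy, hz1, hz]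
  have hfK : ∀ z ∈ Kset, f z = some (Sum.inr 2) := by
    intro z hz
    have hzx : z ≠ x := fun h => hxK (h ▸ hz)
    have hzy : z ≠ y := fun h => hyK (h ▸ hz)
    have hz1 : z ∉ A₁ := fun h => hA₁K z h hz
    have hz2 : z ∉ A₂ := fun h => hA₂K z h hz
    simp [hfdef, hzx, hzy, hz1, hz2, hz]
  have hfib : ∀ z w, f z = some w →
      (z = x ∧ w = Sum.inl 0) ∨ (z = y ∧ w = Sum.inl 1) ∨ (z ∈ A₁ ∧ w = Sum.inr 0) ∨
      (z ∈ A₂ ∧ w = Sum.inr 1) ∨ (z ∈ Kset ∧ w = Sum.inr 2) := by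
    intro z w h
    simp only [hfdef] at h
    split_ifs at h with h1 h2 h3 h4 h5
    · exact Or.inl ⟨h1, (Option.some_injective _ h).symm⟩
    · exact Or.inr (Or.inl ⟨h2, (Option.some_injective _ h).symm⟩)
    · exact Or.inr (Or.inr (Or.inl ⟨h3, (Option.some_injective _ h).symm⟩))
    · exact Or.inr (Or.inr (Or.inr (Or.inl ⟨h4, (Option.some_injective _ h).symm⟩)))
    · exact Or.inr (Or.inr (Or.inr (Or.inr ⟨h5, (Option.some_injective _ h).symm⟩)))
  have hsetx : {z | f z = some (Sum.inl 0)} = {x} := by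
    ext z
    constructor
    · intro h
      rcases hfib z _ h with ⟨hz, hw⟩ | ⟨hz, hw⟩ | ⟨hz, hw⟩ | ⟨hz, hw⟩ | ⟨hz, hw⟩
      · exact hz
      all_goals exact absurd hw (by decide)
    · rintro rfl; exact hfx
  have hsety : {z | f z = some (Sum.inl 1)} = {y} := by
    ext z
    constructor
    · intro h
      rcases hfib z _ h with ⟨hz, hw⟩ | ⟨hz, hw⟩ | ⟨hz, hw⟩ | ⟨hz, hw⟩ | ⟨hz, hw⟩
      · exact absurd hw (by decide)
      · exact hz
      all_goals exact absurd hw (by decide)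
    · rintro rfl; exact hfy
  have hsetA₁ : {z | f z = some (Sum.inr 0)} = A₁ := by
    ext z
    constructor
    · intro h
      rcases hfib z _ h with ⟨hz, hw⟩ | ⟨hz, hw⟩ | ⟨hz, hw⟩ | ⟨hz, hw⟩ | ⟨hz, hw⟩
      · exact absurd hw (by decide)
      · exact absurd hw (by decide)
      · exact hz
      all_goals exact absurd hw (by decide)
    · exact fun hz => hfA₁ z hz
  have hsetA₂ : {z | f z = some (Sum.inr 1)} = A₂ := by
    ext z
    constructor
    · intro h
      rcases hfib z _ h with ⟨hz, hw⟩ | ⟨hz, hw⟩ | ⟨hz, hw⟩ | ⟨hz, hw⟩ | ⟨hz, hw⟩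
      · exact absurd hw (by decide)
      · exact absurd hw (by decide)
      · exact absurd hw (by decide)
      · exact hz
      · exact absurd hw (by decide)
    · exact fun hz => hfA₂ z hz
  have hsetK : {z | f z = some (Sum.inr 2)} = Kset := by
    ext z
    constructor
    · intro h
      rcases hfib z _ h with ⟨hz, hw⟩ | ⟨hz, hw⟩ | ⟨hz, hw⟩ | ⟨hz, hw⟩ | ⟨hz, hw⟩
      · exact absurd hw (by decide)
      · exact absurd hw (by decide)
      · exact absurd hw (by decide)
      · exact absurd hw (by decide)
      · exact hz
    · exact fun hz => hfK z hz
  refine ⟨f, ?_, ?_, ?_⟩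
  · rintro (i | j)
    · fin_cases i
      · exact ⟨x, hfx⟩
      · exact ⟨y, hfy⟩
    · fin_cases j
      · exact ⟨a₁, hfA₁ _ ha₁⟩
      · exact ⟨a₂, hfA₂ _ ha₂⟩
      · exact ⟨v₀, hfK _ hv₀K⟩
  · rintro (i | j)
    · fin_cases i
      · show (G.induce {z | f z = some (Sum.inl 0)}).Connected
        rw [hsetx]; exact aux_singleton_connected x
      · show (G.induce {z | f z = some (Sum.inl 1)}).Connected
        rw [hsety]; exact aux_singleton_connected y
    · fin_cases j
      · show (G.induce {z | f z = some (Sum.inr 0)}).Connected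
        rw [hsetA₁]; exact hA₁conn
      · show (G.induce {z | f z = some (Sum.inr 1)}).Connected
        rw [hsetA₂]; exact hA₂conn
      · show (G.induce {z | f z = some (Sum.inr 2)}).Connected
        rw [hsetK]; exact hKconn
  · rintro (i | j) (i' | j') hadj
    · simp [completeBipartiteGraph] at hadj
    · fin_cases i <;> fin_cases j'
      · exact ⟨x, a₁, hfx, hfA₁ _ ha₁, hxa₁⟩
      · exact ⟨x, b₂, hfx, hfA₂ _ hb₂, hxb₂⟩
      · exact ⟨x, kx, hfx, hfK _ hkxK, hkxadj.symm⟩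
      · exact ⟨y, b₁, hfy, hfA₁ _ hb₁, hyb₁⟩
      · exact ⟨y, a₂, hfy, hfA₂ _ ha₂, hya₂⟩
      · exact ⟨y, ky, hfy, hfK _ hkyK, hkyadj.symm⟩
    · fin_cases j <;> fin_cases i'
      · exact ⟨a₁, x, hfA₁ _ ha₁, hfx, hxa₁.symm⟩
      · exact ⟨b₁, y, hfA₁ _ hb₁, hfy, hyb₁.symm⟩
      · exact ⟨b₂, x, hfA₂ _ hb₂, hfx, hxb₂.symm⟩
      · exact ⟨a₂, y, hfA₂ _ ha₂, hfy, hya₂.symm⟩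
      · exact ⟨kx, x, hfK _ hkxK, hfx, hkxadj⟩
      · exact ⟨ky, y, hfK _ hkyK, hfy, hkyadj⟩
    · simp [completeBipartiteGraph] at hadj

end Aux

/-- `K_{2,3}` is 2-connected and non-hamiltonian, and every 2-connected
non-hamiltonian graph contains `K_{2,3}` as a minor (so `K_{2,3}` is the unique
minor-minimal 2-connected non-hamiltonian graph). -/
theorem K23_minor_minimal :
    KConnected 2 (completeBipartiteGraph (Fin 2) (Fin 3)) ∧
    (¬ ∃ (a : Fin 2 ⊕ Fin 3) (p : (completeBipartiteGraph (Fin 2) (Fin 3)).Walk a a),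
      p.IsHamiltonianCycle) ∧
    ∀ (V : Type) [Fintype V] [DecidableEq V] (G : SimpleGraph V),
      KConnected 2 G → (¬ ∃ (a : V) (p : G.Walk a a), p.IsHamiltonianCycle) →
      IsMinor (completeBipartiteGraph (Fin 2) (Fin 3)) G := by
  exact ⟨K23_two_connected, K23_not_hamiltonian, fun V _ _ G h1 h2 => main3 V G h1 h2⟩
end
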